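/- (Differentiation formula for derivations, formula (1.1) of the paper.) Let D : A → A be a continuous ℂ-linear map satisfying the Leibniz rule D(a·b) = D(a)·b + a·D(b) for all a, b ∈ A. Then for every x ∈ A: D(exp(x)) = ∫₀¹ exp(s·x)·D(x)·exp((1−s)·x) ds. -/

import Mathlib

open MeasureTheory NormedSpace

/-!
With `f s = exp (s • x) * D (exp ((1 - s) • x))`, the Leibniz rule gives
`f' s = -(exp (s • x) * D x * exp ((1 - s) • x))`: the terms `± exp (s • x) * x * D (…)` cancel.
Since `f 0 = D (exp x)` and `f 1 = exp x * D 1 = 0`, the formula is the fundamental theorem of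
calculus for `f` on `[0, 1]`.
-/

theorem map_one_eq_zero_of_map_mul {R : Type*} [Ring R] (D : R → R)
    (hD : ∀ a b : R, D (a * b) = D a * b + a * D b) : D 1 = 0 := by
  simpa only [mul_one, one_mul, left_eq_add] using hD 1 1

section

variable {A : Type*} [NormedRing A] [NormedAlgebra ℝ A] [CompleteSpace A]

theorem continuous_exp_smul (x : A) : Continuous fun s : ℝ => exp (s • x) :=
  continuous_iff_continuousAt.2 fun s => (hasDerivAt_exp_smul_const x s).continuousAt

theorem hasDerivAt_exp_one_sub_smul (x : A) (s : ℝ) :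
    HasDerivAt (fun u : ℝ => exp ((1 - u) • x)) (-(x * exp ((1 - s) • x))) s := by
  have h := (hasDerivAt_exp_smul_const' x (1 - s)).scomp s ((hasDerivAt_id s).const_sub 1)
  simpa [Function.comp_def] using h

theorem hasDerivAt_exp_smul_mul_map_exp_one_sub_smul (D : A →L[ℝ] A)
    (hD : ∀ a b : A, D (a * b) = D a * b + a * D b) (x : A) (s : ℝ) :
    HasDerivAt (fun u : ℝ => exp (u • x) * D (exp ((1 - u) • x)))
      (-(exp (s • x) * D x * exp ((1 - s) • x))) s := by
  convert (hasDerivAt_exp_smul_const x s).mul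
    (D.hasFDerivAt.comp_hasDerivAt s (hasDerivAt_exp_one_sub_smul x s)) using 1
  · rfl
  rw [Function.comp_apply, map_neg, hD]
  noncomm_ring

theorem map_exp_eq_intervalIntegral (D : A →L[ℝ] A)
    (hD : ∀ a b : A, D (a * b) = D a * b + a * D b) (x : A) :
    D (exp x) = ∫ s in (0 : ℝ)..1, exp (s • x) * D x * exp ((1 - s) • x) := by
  have hcont : Continuous fun s : ℝ => exp (s • x) * D x * exp ((1 - s) • x) :=
    ((continuous_exp_smul x).mul continuous_const).mul
      ((continuous_exp_smul x).comp (continuous_const.sub continuous_id))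
  have hFTC := intervalIntegral.integral_eq_sub_of_hasDerivAt
    (fun s _ => hasDerivAt_exp_smul_mul_map_exp_one_sub_smul D hD x s)
    (hcont.neg.intervalIntegrable 0 1)
  simpa [intervalIntegral.integral_neg, map_one_eq_zero_of_map_mul D hD] using hFTC.symm

end

/-- **Differentiation formula for derivations, formula (1.1) of the paper.**
`A` is a unital complex Banach algebra, `exp` is the exponential series
`exp(x) = Σ_{n≥0} xⁿ/n!`, and the integral is a Bochner integral over `s ∈ [0,1]`.
Let `D : A → A` be a continuous ℂ-linear map satisfying the Leibniz rule
`D(a·b) = D(a)·b + a·D(b)` for all `a, b ∈ A`.  Then for every `x ∈ A`: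
`D(exp(x)) = ∫₀¹ exp(s·x)·D(x)·exp((1−s)·x) ds`. -/
theorem derivation_differentiation_formula
    {A : Type*} [NormedRing A] [NormedAlgebra ℂ A] [CompleteSpace A]
    (D : A →L[ℂ] A) (hD : ∀ a b : A, D (a * b) = D a * b + a * D b) (x : A) :
    D (NormedSpace.exp x) =
      ∫ s in Set.Icc (0 : ℝ) 1,
        NormedSpace.exp (s • x) * D x * NormedSpace.exp ((1 - s) • x) := by
  rw [integral_Icc_eq_integral_Ioc, ← intervalIntegral.integral_of_le zero_le_one]
  exact map_exp_eq_intervalIntegral (D.restrictScalars ℝ) hD x
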